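/- Let Δ_LB = x²Δ − 𝔼(M − 2 + 𝔼) be the super Laplace–Beltrami operator on 𝒫. Then Δ_LB commutes with the operator of multiplication by x², and for all integers k, j ≥ 0 and every H_k ∈ ℋ_k one has Δ_LB(x^{2j} H_k) = −k(M − 2 + k) x^{2j} H_k. -/
import Mathlib


set_option synthInstance.maxHeartbeats 1000000
set_option maxHeartbeats 1000000
open scoped TensorProduct
open MvPolynomial

noncomputable section

variable (m n : ℕ)

/-- The Grassmann algebra Λ_{2n} on `2n` anticommuting generators. -/
abbrev Grass (n : ℕ) := ExteriorAlgebra ℝ (Fin (2*n) → ℝ)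

/-- The algebra of super-polynomials 𝒫 = ℝ[x_1,…,x_m] ⊗ Λ_{2n}. -/
abbrev SuperPoly (m n : ℕ) := MvPolynomial (Fin m) ℝ ⊗[ℝ] Grass n

/-- The fermionic generator x`_i. -/
def fgen (i : Fin (2*n)) : Grass n :=
  ExteriorAlgebra.ι ℝ (Pi.single i (1:ℝ))

/-- The fermionic partial derivative ∂_{x`_i}, the odd derivation with
∂_{x`_i}(x`_j) = δ_{ij}: contraction with the i-th dual basis vector. -/
def fpderiv (i : Fin (2*n)) : Grass n →ₗ[ℝ] Grass n :=
  CliffordAlgebra.contractLeft (LinearMap.proj i)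

/-- The fermionic Laplace operator on Λ_{2n}. -/
def lapF : Grass n →ₗ[ℝ] Grass n :=
  (4:ℝ) • ∑ j : Fin n,
    (fpderiv n ⟨2*j.1, by omega⟩) ∘ₗ (fpderiv n ⟨2*j.1+1, by omega⟩)

/-- The bosonic Laplace operator Δ_b = −∑ ∂_{x_j}² on ℝ[x_1,…,x_m]. -/
def lapB : MvPolynomial (Fin m) ℝ →ₗ[ℝ] MvPolynomial (Fin m) ℝ :=
  - ∑ j : Fin m, (pderiv j).toLinearMap ∘ₗ (pderiv j).toLinearMap

/-- The super Laplace operator Δ = Δ_b + Δ_f on 𝒫. -/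
def lap : SuperPoly m n →ₗ[ℝ] SuperPoly m n :=
  LinearMap.rTensor (Grass n) (lapB m) + LinearMap.lTensor (MvPolynomial (Fin m) ℝ) (lapF n)

/-- x̲² = −∑ x_j². -/
def rb2 : MvPolynomial (Fin m) ℝ := - ∑ j : Fin m, (X j)^2

/-- x`² = ∑_{j=1}^n x`_{2j−1} x`_{2j}. -/
def rf2 : Grass n := ∑ j : Fin n, fgen n ⟨2*j.1, by omega⟩ * fgen n ⟨2*j.1+1, by omega⟩

/-- The generalized norm squared x² = x̲² + x`² as an element of 𝒫. -/
def r2 : SuperPoly m n := (rb2 m) ⊗ₜ 1 + 1 ⊗ₜ (rf2 n)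

/-- The grade-`i` part of the Grassmann algebra. -/
def fgrade (i : ℕ) : Submodule ℝ (Grass n) :=
  (LinearMap.range (ExteriorAlgebra.ι ℝ (M := Fin (2*n) → ℝ)))^i

/-- The space 𝒫_k of super-polynomials homogeneous of total degree k. -/
def P (k : ℕ) : Submodule ℝ (SuperPoly m n) :=
  ⨆ i : Fin (k+1), Submodule.map₂ (TensorProduct.mk ℝ _ _)
    (homogeneousSubmodule (Fin m) ℝ (k - i.1)) (fgrade n i.1)

/-- The space ℋ_k of spherical harmonics of degree k. -/
def H (k : ℕ) : Submodule ℝ (SuperPoly m n) :=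
  P m n k ⊓ LinearMap.ker (lap m n)

/-- The super-dimension M = m − 2n. -/
def sdim : ℤ := (m : ℤ) - 2*n

/-- The super Euler operator 𝔼 = ∑ x_j ∂_{x_j} + ∑ x`_j ∂_{x`_j}. -/
def euler : SuperPoly m n →ₗ[ℝ] SuperPoly m n :=
  LinearMap.rTensor (Grass n)
      (∑ j : Fin m, LinearMap.mulLeft ℝ (X j) ∘ₗ (pderiv j).toLinearMap) +
    LinearMap.lTensor (MvPolynomial (Fin m) ℝ)
      (∑ i : Fin (2*n), LinearMap.mulLeft ℝ (fgen n i) ∘ₗ fpderiv n i)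

/-- 𝒫_k as the k-eigenspace of the Euler operator: {ω ∈ 𝒫 : 𝔼ω = kω}. -/
def PE (k : ℕ) : Submodule ℝ (SuperPoly m n) :=
  LinearMap.ker (euler m n - (k : ℝ) • LinearMap.id)

/-- ℋ_k = {ω ∈ 𝒫_k : Δω = 0}. -/
def HE (k : ℕ) : Submodule ℝ (SuperPoly m n) :=
  PE m n k ⊓ LinearMap.ker (lap m n)

/-- The super Laplace–Beltrami operator Δ_LB = x²Δ − 𝔼(M − 2 + 𝔼). -/
def lapLB : SuperPoly m n →ₗ[ℝ] SuperPoly m n :=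
  LinearMap.mulLeft ℝ (r2 m n) ∘ₗ lap m n -
    euler m n ∘ₗ (((sdim m n : ℝ) - 2) • LinearMap.id + euler m n)


/-! ### Auxiliary material -/

section AuxRing
variable {S : Type*} [Ring S]

lemma ring_ff_same (a1 a2 b1 b2 : S)
    (h11 : b1*a1 = 1 - a1*b1) (h22 : b2*a2 = 1 - a2*b2)
    (h12 : b1*a2 = -(a2*b1)) (h21 : b2*a1 = -(a1*b2)) :
    b1*b2*(a1*a2) = a1*a2*(b1*b2) + (-1 + a1*b1 + a2*b2) := by
  have e1 : b1*b2*(a1*a2) = -((b1*a1)*(b2*a2)) := by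
    calc b1*b2*(a1*a2) = b1*(b2*a1)*a2 := by noncomm_ring
    _ = b1*(-(a1*b2))*a2 := by rw [h21]
    _ = -((b1*a1)*(b2*a2)) := by noncomm_ring
  have e2 : a1*(b1*a2)*b2 = -(a1*a2*(b1*b2)) := by rw [h12]; noncomm_ring
  calc b1*b2*(a1*a2) = -((1 - a1*b1)*(1 - a2*b2)) := by rw [e1, h11, h22]
  _ = -1 + a1*b1 + a2*b2 - a1*(b1*a2)*b2 := by noncomm_ring
  _ = -1 + a1*b1 + a2*b2 - -(a1*a2*(b1*b2)) := by rw [e2]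
  _ = a1*a2*(b1*b2) + (-1 + a1*b1 + a2*b2) := by noncomm_ring

lemma ring_ff_diff (a1 a2 b1 b2 : S)
    (h11 : b1*a1 = -(a1*b1)) (h22 : b2*a2 = -(a2*b2))
    (h12 : b1*a2 = -(a2*b1)) (h21 : b2*a1 = -(a1*b2)) :
    b1*b2*(a1*a2) = a1*a2*(b1*b2) := by
  calc b1*b2*(a1*a2) = b1*(b2*a1)*a2 := by noncomm_ring
  _ = b1*(-(a1*b2))*a2 := by rw [h21]
  _ = -((b1*a1)*(b2*a2)) := by noncomm_ring
  _ = -((-(a1*b1))*(-(a2*b2))) := by rw [h11, h22]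
  _ = -(a1*(b1*a2)*b2) := by noncomm_ring
  _ = -(a1*(-(a2*b1))*b2) := by rw [h12]
  _ = a1*a2*(b1*b2) := by noncomm_ring

lemma ring_e_first (a1 a2 b1 : S) (h11 : b1*a1 = 1 - a1*b1) (hsq : a1*a1 = 0)
    (hswap : a2*a1 = -(a1*a2)) :
    a1*b1*(a1*a2) = a1*a2*(a1*b1) + a1*a2 := by
  have e1 : a1*b1*(a1*a2) = a1*a2 := by
    calc a1*b1*(a1*a2) = a1*(b1*a1)*a2 := by noncomm_ring
    _ = a1*(1 - a1*b1)*a2 := by rw [h11]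
    _ = a1*a2 - (a1*a1)*(b1*a2) := by noncomm_ring
    _ = a1*a2 := by rw [hsq]; noncomm_ring
  have e2 : a1*a2*(a1*b1) = 0 := by
    calc a1*a2*(a1*b1) = a1*(a2*a1)*b1 := by noncomm_ring
    _ = a1*(-(a1*a2))*b1 := by rw [hswap]
    _ = -((a1*a1)*(a2*b1)) := by noncomm_ring
    _ = 0 := by rw [hsq]; noncomm_ring
  rw [e1, e2, zero_add]

lemma ring_e_second (a1 a2 b2 : S) (h22 : b2*a2 = 1 - a2*b2) (hsq : a2*a2 = 0)
    (h21 : b2*a1 = -(a1*b2)) (hswap : a1*a2 = -(a2*a1)) :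
    a2*b2*(a1*a2) = a1*a2*(a2*b2) + a1*a2 := by
  have e1 : a2*b2*(a1*a2) = a1*a2 := by
    calc a2*b2*(a1*a2) = a2*(b2*a1)*a2 := by noncomm_ring
    _ = a2*(-(a1*b2))*a2 := by rw [h21]
    _ = -((a2*a1)*(b2*a2)) := by noncomm_ring
    _ = -((a2*a1)*(1 - a2*b2)) := by rw [h22]
    _ = -(a2*a1) + a2*(a1*a2)*b2 := by noncomm_ring
    _ = -(a2*a1) + a2*(-(a2*a1))*b2 := by rw [hswap]
    _ = -(a2*a1) - (a2*a2)*(a1*b2) := by noncomm_ring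
    _ = -(a2*a1) := by rw [hsq]; simp
    _ = a1*a2 := by rw [hswap]
  have e2 : a1*a2*(a2*b2) = 0 := by
    calc a1*a2*(a2*b2) = a1*(a2*a2)*b2 := by noncomm_ring
    _ = 0 := by rw [hsq]; noncomm_ring
  rw [e1, e2, zero_add]

lemma ring_e_diff (a a1 a2 b : S)
    (hb1 : b*a1 = -(a1*b)) (hb2 : b*a2 = -(a2*b))
    (ha1 : a*a1 = -(a1*a)) (ha2 : a*a2 = -(a2*a)) :
    a*b*(a1*a2) = a1*a2*(a*b) := by
  calc a*b*(a1*a2) = a*(b*a1)*a2 := by noncomm_ring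
  _ = a*(-(a1*b))*a2 := by rw [hb1]
  _ = -((a*a1)*(b*a2)) := by noncomm_ring
  _ = -((-(a1*a))*(-(a2*b))) := by rw [ha1, hb2]
  _ = -(a1*(a*a2)*b) := by noncomm_ring
  _ = -(a1*(-(a2*a))*b) := by rw [ha2]
  _ = a1*a2*(a*b) := by noncomm_ring

lemma ring_bos_same (x d : S) (h : d*x = 1 + x*d) :
    d*d*(x*x) = x*x*(d*d) + 1 + 1 + (x*d) + (x*d) + (x*d) + (x*d) := by
  calc d*d*(x*x) = d*((1+x*d)*x) := by rw [← h]; noncomm_ring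
  _ = (d*x) + (d*x)*(d*x) := by noncomm_ring
  _ = (1+x*d) + (1+x*d)*(1+x*d) := by rw [h]
  _ = 1 + 1 + (x*d + x*d + x*d) + x*((d*x)*d) := by noncomm_ring
  _ = 1 + 1 + (x*d + x*d + x*d) + x*((1+x*d)*d) := by rw [h]
  _ = x*x*(d*d) + 1 + 1 + (x*d) + (x*d) + (x*d) + (x*d) := by noncomm_ring

lemma ring_bos_diff (x d : S) (h : d*x = x*d) :
    d*d*(x*x) = x*x*(d*d) := by
  calc d*d*(x*x) = d*(d*x)*x := by noncomm_ring
  _ = d*(x*d)*x := by rw [h]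
  _ = (d*x)*(d*x) := by noncomm_ring
  _ = (x*d)*(x*d) := by rw [h]
  _ = x*(d*x)*d := by noncomm_ring
  _ = x*(x*d)*d := by rw [h]
  _ = x*x*(d*d) := by noncomm_ring

lemma ring_be_same (x d : S) (h : d*x = 1 + x*d) :
    x*d*(x*x) = x*x*(x*d) + (x*x) + (x*x) := by
  calc x*d*(x*x) = x*((1+x*d)*x) := by rw [← h]; noncomm_ring
  _ = x*x + (x*x)*(d*x) := by noncomm_ring
  _ = x*x + (x*x)*(1+x*d) := by rw [h]
  _ = x*x*(x*d) + (x*x) + (x*x) := by noncomm_ring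

lemma ring_be_diff (y x d : S) (hdx : d*x = x*d) (hyx : y*x = x*y) :
    y*d*(x*x) = x*x*(y*d) := by
  calc y*d*(x*x) = y*(d*x)*x := by noncomm_ring
  _ = y*(x*d)*x := by rw [hdx]
  _ = (y*x)*(d*x) := by noncomm_ring
  _ = (x*y)*(x*d) := by rw [hdx, hyx]
  _ = x*(y*x)*d := by noncomm_ring
  _ = x*(x*y)*d := by rw [hyx]
  _ = x*x*(y*d) := by noncomm_ring

end AuxRing

namespace LBAux

/-- index of the first element of the `j`-th fermionic pair -/
def pr0 (n : ℕ) (j : Fin n) : Fin (2*n) := ⟨2*j.1, by omega⟩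
/-- index of the second element of the `j`-th fermionic pair -/
def pr1 (n : ℕ) (j : Fin n) : Fin (2*n) := ⟨2*j.1+1, by omega⟩

lemma sum_pairs {E : Type*} [AddCommMonoid E] (n : ℕ) (g : Fin (2*n) → E) :
    ∑ i : Fin n, (g (pr0 n i) + g (pr1 n i)) = ∑ k, g k := by
  have hbij : Function.Bijective
      (fun p : Fin n × Fin 2 => (⟨2*p.1.1 + p.2.1, by omega⟩ : Fin (2*n))) := by
    rw [Fintype.bijective_iff_injective_and_card]
    constructor
    · rintro ⟨⟨i, hi⟩, ⟨b, hb⟩⟩ ⟨⟨j, hj⟩, ⟨c, hc⟩⟩ h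
      simp only [Fin.mk.injEq] at h
      simp only [Prod.mk.injEq, Fin.mk.injEq]
      omega
    · simp [Fintype.card_prod]; ring
  rw [← Fintype.sum_bijective _ hbij _ g (fun _ => rfl)]
  rw [Fintype.sum_prod_type]
  refine Finset.sum_congr rfl fun i _ => ?_
  rw [Fin.sum_univ_two]
  congr 1

lemma pr0_ne_pr1 (n : ℕ) (i j : Fin n) : pr0 n i ≠ pr1 n j := by
  simp only [pr0, pr1, Ne, Fin.mk.injEq]
  omega

lemma pr1_ne_pr0 (n : ℕ) (i j : Fin n) : pr1 n i ≠ pr0 n j := by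
  simp only [pr0, pr1, Ne, Fin.mk.injEq]
  omega

lemma pr0_inj (n : ℕ) {i j : Fin n} (h : i ≠ j) : pr0 n i ≠ pr0 n j := by
  simp only [pr0, Ne, Fin.mk.injEq]
  intro hc
  exact h (Fin.ext (by omega))

lemma pr1_inj (n : ℕ) {i j : Fin n} (h : i ≠ j) : pr1 n i ≠ pr1 n j := by
  simp only [pr1, Ne, Fin.mk.injEq]
  intro hc
  exact h (Fin.ext (by omega))

/-! #### Fermionic creation/annihilation operators -/

/-- creation operator -/
def Aop (n : ℕ) (i : Fin (2*n)) : Module.End ℝ (Grass n) := LinearMap.mulLeft ℝ (fgen n i)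
/-- annihilation operator -/
def Bop (n : ℕ) (i : Fin (2*n)) : Module.End ℝ (Grass n) := fpderiv n i

lemma car (n : ℕ) (i j : Fin (2*n)) :
    Bop n i * Aop n j = (if i = j then (1:Module.End ℝ (Grass n)) else 0) - Aop n j * Bop n i := by
  refine LinearMap.ext fun w => ?_
  simp only [Module.End.mul_apply, Aop, Bop, fpderiv, fgen, LinearMap.mulLeft_apply,
    LinearMap.sub_apply]
  rw [CliffordAlgebra.contractLeft_ι_mul]
  have hproj : (LinearMap.proj i : (Fin (2*n) → ℝ) →ₗ[ℝ] ℝ) (Pi.single j (1:ℝ))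
      = if i = j then (1:ℝ) else 0 := by
    simp [Pi.single_apply, eq_comm]
  rw [hproj]
  split_ifs with h
  · simp
  · simp

lemma ba_eq (n : ℕ) (i : Fin (2*n)) : Bop n i * Aop n i = 1 - Aop n i * Bop n i := by
  rw [car, if_pos rfl]

lemma ba_ne (n : ℕ) {i j : Fin (2*n)} (h : i ≠ j) :
    Bop n i * Aop n j = -(Aop n j * Bop n i) := by
  rw [car, if_neg h, zero_sub]

lemma fgen_swap (n : ℕ) (i j : Fin (2*n)) : fgen n i * fgen n j = -(fgen n j * fgen n i) := by
  rw [fgen, fgen, eq_neg_iff_add_eq_zero]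
  exact ExteriorAlgebra.ι_add_mul_swap _ _

lemma aa (n : ℕ) (i j : Fin (2*n)) : Aop n i * Aop n j = -(Aop n j * Aop n i) := by
  refine LinearMap.ext fun w => ?_
  simp only [Module.End.mul_apply, Aop, LinearMap.mulLeft_apply, LinearMap.neg_apply,
    ← mul_assoc, fgen_swap n i j, neg_mul]

lemma a_sq (n : ℕ) (i : Fin (2*n)) : Aop n i * Aop n i = 0 := by
  refine LinearMap.ext fun w => ?_
  simp only [Module.End.mul_apply, Aop, LinearMap.mulLeft_apply, ← mul_assoc, fgen,
    ExteriorAlgebra.ι_sq_zero, zero_mul, LinearMap.zero_apply]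

/-! #### Fermionic operator identities -/

lemma keyF (n : ℕ) (i j : Fin n) :
    Bop n (pr0 n i) * Bop n (pr1 n i) * (Aop n (pr0 n j) * Aop n (pr1 n j)) =
      Aop n (pr0 n j) * Aop n (pr1 n j) * (Bop n (pr0 n i) * Bop n (pr1 n i)) +
      (if i = j then
        (-1 + Aop n (pr0 n j) * Bop n (pr0 n j) + Aop n (pr1 n j) * Bop n (pr1 n j)) else 0) := by
  rcases eq_or_ne i j with rfl | hne
  · rw [if_pos rfl]
    exact ring_ff_same _ _ _ _ (ba_eq n _) (ba_eq n _)
      (ba_ne n (pr0_ne_pr1 n i i)) (ba_ne n (pr1_ne_pr0 n i i))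
  · rw [if_neg hne, add_zero]
    exact ring_ff_diff _ _ _ _
      (ba_ne n (pr0_inj n hne)) (ba_ne n (pr1_inj n hne))
      (ba_ne n (pr0_ne_pr1 n i j)) (ba_ne n (pr1_ne_pr0 n i j))

lemma keyE (n : ℕ) (k : Fin (2*n)) (j : Fin n) :
    Aop n k * Bop n k * (Aop n (pr0 n j) * Aop n (pr1 n j)) =
      Aop n (pr0 n j) * Aop n (pr1 n j) * (Aop n k * Bop n k) +
      (if k = pr0 n j then Aop n (pr0 n j) * Aop n (pr1 n j) else 0) +
      (if k = pr1 n j then Aop n (pr0 n j) * Aop n (pr1 n j) else 0) := by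
  rcases eq_or_ne k (pr0 n j) with rfl | h0
  · rw [if_pos rfl, if_neg (pr0_ne_pr1 n j j), add_zero]
    exact ring_e_first _ _ _ (ba_eq n _) (a_sq n _) (aa n _ _)
  rcases eq_or_ne k (pr1 n j) with rfl | h1
  · rw [if_neg h0, if_pos rfl, add_zero]
    exact ring_e_second _ _ _ (ba_eq n _) (a_sq n _) (ba_ne n (pr1_ne_pr0 n j j)) (aa n _ _)
  · rw [if_neg h0, if_neg h1, add_zero, add_zero]
    exact ring_e_diff _ _ _ _ (ba_ne n h0) (ba_ne n h1) (aa n _ _) (aa n _ _)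

/-- multiplication by `rf2` as a sum of pair creation operators -/
lemma mulLeft_rf2 (n : ℕ) :
    LinearMap.mulLeft ℝ (rf2 n) = ∑ j : Fin n, Aop n (pr0 n j) * Aop n (pr1 n j) := by
  refine LinearMap.ext fun w => ?_
  simp only [LinearMap.mulLeft_apply, rf2, LinearMap.sum_apply, Module.End.mul_apply, Aop,
    LinearMap.mulLeft_apply, Finset.sum_mul, mul_assoc]
  rfl

lemma hF (n : ℕ) :
    (∑ i : Fin n, Bop n (pr0 n i) * Bop n (pr1 n i)) *
      (∑ j : Fin n, Aop n (pr0 n j) * Aop n (pr1 n j)) =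
    (∑ j : Fin n, Aop n (pr0 n j) * Aop n (pr1 n j)) *
      (∑ i : Fin n, Bop n (pr0 n i) * Bop n (pr1 n i)) -
      n • (1 : Module.End ℝ (Grass n)) + ∑ k : Fin (2*n), Aop n k * Bop n k := by
  rw [Finset.sum_mul_sum, Finset.sum_mul_sum]
  simp_rw [keyF n]
  rw [Finset.sum_comm (γ := Fin n)]
  simp only [Finset.sum_add_distrib, Finset.sum_ite_eq, Finset.sum_ite_eq', Finset.mem_univ,
    if_true]
  rw [← sum_pairs n (fun k => Aop n k * Bop n k)]
  simp only [Finset.sum_add_distrib, Finset.sum_const, Finset.card_univ, Fintype.card_fin,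
    smul_neg]
  abel

lemma hFe (n : ℕ) :
    (∑ k : Fin (2*n), Aop n k * Bop n k) *
      (∑ j : Fin n, Aop n (pr0 n j) * Aop n (pr1 n j)) =
    (∑ j : Fin n, Aop n (pr0 n j) * Aop n (pr1 n j)) *
      (∑ k : Fin (2*n), Aop n k * Bop n k) +
      (∑ j : Fin n, Aop n (pr0 n j) * Aop n (pr1 n j)) +
      (∑ j : Fin n, Aop n (pr0 n j) * Aop n (pr1 n j)) := by
  rw [Finset.sum_mul_sum, Finset.sum_mul_sum]
  simp_rw [keyE n]
  rw [Finset.sum_comm (γ := Fin (2*n))]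
  simp only [Finset.sum_add_distrib, Finset.sum_ite_eq, Finset.sum_ite_eq', Finset.mem_univ,
    if_true]
  try abel

/-! #### Bosonic operators -/

/-- multiplication by `X j` -/
def Xop (m : ℕ) (j : Fin m) : Module.End ℝ (MvPolynomial (Fin m) ℝ) := LinearMap.mulLeft ℝ (X j)
/-- partial derivative -/
def Dop (m : ℕ) (j : Fin m) : Module.End ℝ (MvPolynomial (Fin m) ℝ) := (pderiv j).toLinearMap

lemma heis_same (m : ℕ) (j : Fin m) : Dop m j * Xop m j = 1 + Xop m j * Dop m j := by
  refine LinearMap.ext fun f => ?_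
  simp [Dop, Xop, pderiv_mul, pderiv_X]
  ring

lemma heis_diff (m : ℕ) {j i : Fin m} (h : j ≠ i) : Dop m j * Xop m i = Xop m i * Dop m j := by
  refine LinearMap.ext fun f => ?_
  simp [Dop, Xop, pderiv_mul, pderiv_X, Pi.single_apply, h]

lemma xx_comm (m : ℕ) (j i : Fin m) : Xop m j * Xop m i = Xop m i * Xop m j := by
  refine LinearMap.ext fun f => ?_
  simp only [Module.End.mul_apply, Xop, LinearMap.mulLeft_apply, ← mul_assoc]
  ring_nf

lemma mulLeft_rb2 (m : ℕ) :
    LinearMap.mulLeft ℝ (rb2 m) = -(∑ i : Fin m, Xop m i * Xop m i) := by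
  refine LinearMap.ext fun f => ?_
  simp only [LinearMap.mulLeft_apply, rb2, LinearMap.neg_apply, LinearMap.sum_apply,
    Module.End.mul_apply, Xop, neg_mul, Finset.sum_mul, pow_two, mul_assoc, neg_neg,
    Finset.sum_neg_distrib]

lemma keyB (m : ℕ) (j i : Fin m) :
    Dop m j * Dop m j * (Xop m i * Xop m i) =
      Xop m i * Xop m i * (Dop m j * Dop m j) +
      (if j = i then
        ((1:Module.End ℝ (MvPolynomial (Fin m) ℝ)) + 1 + (Xop m i * Dop m i) +
          (Xop m i * Dop m i) + (Xop m i * Dop m i) + (Xop m i * Dop m i)) else 0) := by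
  rcases eq_or_ne j i with rfl | hne
  · rw [if_pos rfl]
    have := ring_bos_same (Xop m j) (Dop m j) (heis_same m j)
    rw [this]; abel
  · rw [if_neg hne, add_zero]
    exact ring_bos_diff _ _ (heis_diff m hne)

lemma keyBE (m : ℕ) (j i : Fin m) :
    Xop m j * Dop m j * (Xop m i * Xop m i) =
      Xop m i * Xop m i * (Xop m j * Dop m j) +
      (if j = i then (Xop m i * Xop m i + Xop m i * Xop m i) else 0) := by
  rcases eq_or_ne j i with rfl | hne
  · rw [if_pos rfl]
    have := ring_be_same (Xop m j) (Dop m j) (heis_same m j)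
    rw [this]; abel
  · rw [if_neg hne, add_zero]
    exact ring_be_diff _ _ _ (heis_diff m hne) (xx_comm m j i)

lemma hB (m : ℕ) :
    (∑ j : Fin m, Dop m j * Dop m j) * (∑ i : Fin m, Xop m i * Xop m i) =
    (∑ i : Fin m, Xop m i * Xop m i) * (∑ j : Fin m, Dop m j * Dop m j) +
      m • ((1:Module.End ℝ (MvPolynomial (Fin m) ℝ)) + 1) +
      ((∑ j : Fin m, Xop m j * Dop m j) + (∑ j : Fin m, Xop m j * Dop m j) +
       (∑ j : Fin m, Xop m j * Dop m j) + (∑ j : Fin m, Xop m j * Dop m j)) := by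
  rw [Finset.sum_mul_sum, Finset.sum_mul_sum]
  simp_rw [keyB m]
  rw [Finset.sum_comm (γ := Fin m)]
  simp only [Finset.sum_add_distrib, Finset.sum_ite_eq, Finset.sum_ite_eq', Finset.mem_univ,
    if_true, Finset.sum_const, Finset.card_univ, Fintype.card_fin, smul_smul, smul_add]
  abel

lemma hBe (m : ℕ) :
    (∑ j : Fin m, Xop m j * Dop m j) * (∑ i : Fin m, Xop m i * Xop m i) =
    (∑ i : Fin m, Xop m i * Xop m i) * (∑ j : Fin m, Xop m j * Dop m j) +
      ((∑ j : Fin m, Xop m j * Xop m j) + (∑ j : Fin m, Xop m j * Xop m j)) := by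
  rw [Finset.sum_mul_sum, Finset.sum_mul_sum]
  simp_rw [keyBE m]
  rw [Finset.sum_comm (γ := Fin m)]
  simp only [Finset.sum_add_distrib, Finset.sum_ite_eq, Finset.sum_ite_eq', Finset.mem_univ,
    if_true]
  try abel

/-! #### Scalar-form operator identities -/

/-- bosonic part of the Euler operator -/
def EbOp (m : ℕ) : Module.End ℝ (MvPolynomial (Fin m) ℝ) :=
  ∑ j : Fin m, LinearMap.mulLeft ℝ (X j) ∘ₗ (pderiv j).toLinearMap
/-- fermionic part of the Euler operator -/
def EfOp (n : ℕ) : Module.End ℝ (Grass n) :=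
  ∑ i : Fin (2*n), LinearMap.mulLeft ℝ (fgen n i) ∘ₗ fpderiv n i

lemma EbOp_eq (m : ℕ) : EbOp m = ∑ j : Fin m, Xop m j * Dop m j := rfl
lemma EfOp_eq (n : ℕ) : EfOp n = ∑ k : Fin (2*n), Aop n k * Bop n k := rfl

lemma conv1 {S : Type*} [Ring S] [Algebra ℝ S] {A B s : S} (m : ℕ)
    (h : A = B + m • ((1:S) + 1) + (s + s + s + s)) :
    A = B + (2*(m:ℝ)) • (1:S) + (4:ℝ) • s := by
  rw [h, ← Nat.cast_smul_eq_nsmul ℝ m ((1:S) + 1)]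
  match_scalars <;> ring

lemma conv2 {S : Type*} [Ring S] [Algebra ℝ S] {A B x : S}
    (h : A = B + (x + x)) : -A = -B + (2:ℝ) • (-x) := by
  rw [h]
  match_scalars <;> ring

lemma B1 (m : ℕ) : lapB m * LinearMap.mulLeft ℝ (rb2 m) =
    LinearMap.mulLeft ℝ (rb2 m) * lapB m +
      (2*(m:ℝ)) • (1 : Module.End ℝ (MvPolynomial (Fin m) ℝ)) + (4:ℝ) • EbOp m := by
  have hlapB : lapB m = -(∑ j : Fin m, Dop m j * Dop m j) := rfl
  rw [hlapB, mulLeft_rb2, EbOp_eq,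
    show ∀ a b : Module.End ℝ (MvPolynomial (Fin m) ℝ), (-a) * (-b) = a * b from
      fun a b => neg_mul_neg a b,
    show ∀ a b : Module.End ℝ (MvPolynomial (Fin m) ℝ), (-a) * (-b) = a * b from
      fun a b => neg_mul_neg a b]
  exact conv1 m (hB m)

lemma B2 (m : ℕ) : EbOp m * LinearMap.mulLeft ℝ (rb2 m) =
    LinearMap.mulLeft ℝ (rb2 m) * EbOp m + (2:ℝ) • LinearMap.mulLeft ℝ (rb2 m) := by
  rw [EbOp_eq, mulLeft_rb2,
    show ∀ a b : Module.End ℝ (MvPolynomial (Fin m) ℝ), a * (-b) = -(a * b) from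
      fun a b => mul_neg a b,
    show ∀ a b : Module.End ℝ (MvPolynomial (Fin m) ℝ), (-a) * b = -(a * b) from
      fun a b => neg_mul a b]
  exact conv2 (hBe m)

lemma F1 (n : ℕ) : lapF n * LinearMap.mulLeft ℝ (rf2 n) =
    LinearMap.mulLeft ℝ (rf2 n) * lapF n -
      (4*(n:ℝ)) • (1 : Module.End ℝ (Grass n)) + (4:ℝ) • EfOp n := by
  have hlapF : lapF n = (4:ℝ) • ∑ j : Fin n, Bop n (pr0 n j) * Bop n (pr1 n j) := rfl
  rw [hlapF, EfOp_eq, mulLeft_rf2, smul_mul_assoc, hF n, mul_smul_comm,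
    ← Nat.cast_smul_eq_nsmul ℝ n (1 : Module.End ℝ (Grass n))]
  module

lemma F2 (n : ℕ) : EfOp n * LinearMap.mulLeft ℝ (rf2 n) =
    LinearMap.mulLeft ℝ (rf2 n) * EfOp n + (2:ℝ) • LinearMap.mulLeft ℝ (rf2 n) := by
  rw [EfOp_eq, mulLeft_rf2, hFe n]
  module

/-! #### Lifting to the tensor product -/

lemma mulLeft_tmul_one (m n : ℕ) (a : MvPolynomial (Fin m) ℝ) :
    LinearMap.mulLeft ℝ ((a ⊗ₜ[ℝ] (1 : Grass n)) : SuperPoly m n)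
      = LinearMap.rTensor (Grass n) (LinearMap.mulLeft ℝ a) := by
  refine TensorProduct.ext' fun p g => ?_
  simp [Algebra.TensorProduct.tmul_mul_tmul]

lemma mulLeft_one_tmul (m n : ℕ) (b : Grass n) :
    LinearMap.mulLeft ℝ (((1 : MvPolynomial (Fin m) ℝ) ⊗ₜ[ℝ] b) : SuperPoly m n)
      = LinearMap.lTensor (MvPolynomial (Fin m) ℝ) (LinearMap.mulLeft ℝ b) := by
  refine TensorProduct.ext' fun p g => ?_
  simp [Algebra.TensorProduct.tmul_mul_tmul]

lemma mulLeft_r2 (m n : ℕ) :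
    LinearMap.mulLeft ℝ (r2 m n)
      = LinearMap.rTensor (Grass n) (LinearMap.mulLeft ℝ (rb2 m)) +
        LinearMap.lTensor (MvPolynomial (Fin m) ℝ) (LinearMap.mulLeft ℝ (rf2 n)) := by
  have h : ∀ x y : SuperPoly m n,
      LinearMap.mulLeft ℝ (x + y) = LinearMap.mulLeft ℝ x + LinearMap.mulLeft ℝ y :=
    fun x y => LinearMap.ext fun w => by simp [add_mul]
  rw [r2, h, mulLeft_tmul_one, mulLeft_one_tmul]

section Lift
variable (m n : ℕ)

lemma rT_mul (f g : Module.End ℝ (MvPolynomial (Fin m) ℝ)) :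
    LinearMap.rTensor (Grass n) f * LinearMap.rTensor (Grass n) g
      = LinearMap.rTensor (Grass n) (f * g) := by
  rw [Module.End.mul_eq_comp, Module.End.mul_eq_comp, LinearMap.rTensor_comp]

lemma lT_mul (f g : Module.End ℝ (Grass n)) :
    LinearMap.lTensor (MvPolynomial (Fin m) ℝ) f * LinearMap.lTensor (MvPolynomial (Fin m) ℝ) g
      = LinearMap.lTensor (MvPolynomial (Fin m) ℝ) (f * g) := by
  rw [Module.End.mul_eq_comp, Module.End.mul_eq_comp, LinearMap.lTensor_comp]

lemma mix (f : Module.End ℝ (MvPolynomial (Fin m) ℝ)) (g : Module.End ℝ (Grass n)) :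
    LinearMap.rTensor (Grass n) f * LinearMap.lTensor (MvPolynomial (Fin m) ℝ) g
      = LinearMap.lTensor (MvPolynomial (Fin m) ℝ) g * LinearMap.rTensor (Grass n) f := by
  rw [Module.End.mul_eq_comp, Module.End.mul_eq_comp, LinearMap.rTensor_comp_lTensor,
    LinearMap.lTensor_comp_rTensor]

lemma rT_one : LinearMap.rTensor (Grass n) (1 : Module.End ℝ (MvPolynomial (Fin m) ℝ))
    = 1 := LinearMap.rTensor_id _ _

lemma lT_one : LinearMap.lTensor (MvPolynomial (Fin m) ℝ) (1 : Module.End ℝ (Grass n))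
    = 1 := LinearMap.lTensor_id _ _

lemma superRL : lap m n * LinearMap.mulLeft ℝ (r2 m n)
    = LinearMap.mulLeft ℝ (r2 m n) * lap m n +
      (2*(m:ℝ) - 4*(n:ℝ)) • (1 : Module.End ℝ (SuperPoly m n)) + (4:ℝ) • euler m n := by
  have hL : lap m n = LinearMap.rTensor (Grass n) (lapB m) +
      LinearMap.lTensor (MvPolynomial (Fin m) ℝ) (lapF n) := rfl
  have hE : euler m n = LinearMap.rTensor (Grass n) (EbOp m) +
      LinearMap.lTensor (MvPolynomial (Fin m) ℝ) (EfOp n) := rfl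
  rw [hL, hE, mulLeft_r2]
  simp only [add_mul, mul_add]
  rw [rT_mul, rT_mul, lT_mul, lT_mul, B1 m, F1 n]
  simp only [mix, LinearMap.rTensor_add, LinearMap.lTensor_add, LinearMap.rTensor_smul,
    LinearMap.lTensor_smul, LinearMap.rTensor_sub, LinearMap.lTensor_sub, rT_one, lT_one]
  module

lemma superER : euler m n * LinearMap.mulLeft ℝ (r2 m n)
    = LinearMap.mulLeft ℝ (r2 m n) * euler m n +
      (2:ℝ) • LinearMap.mulLeft ℝ (r2 m n) := by
  have hE : euler m n = LinearMap.rTensor (Grass n) (EbOp m) +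
      LinearMap.lTensor (MvPolynomial (Fin m) ℝ) (EfOp n) := rfl
  rw [hE, mulLeft_r2]
  simp only [add_mul, mul_add]
  rw [rT_mul, rT_mul, lT_mul, lT_mul, B2 m, F2 n]
  simp only [mix, LinearMap.rTensor_add, LinearMap.lTensor_add, LinearMap.rTensor_smul,
    LinearMap.lTensor_smul]
  module

lemma abstractComm {S : Type*} [Ring S] [Algebra ℝ S] (r l e : S) (c : ℝ)
    (hRL : l*r = r*l + (2*c)•(1:S) + (4:ℝ)•e) (hER : e*r = r*e + (2:ℝ)•r) :
    (r*l - e*((c-2)•(1:S)+e))*r = r*(r*l - e*((c-2)•(1:S)+e)) := by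
  have hRL' : ∀ t : S, l * (r * t) = r * (l * t) + (2*c) • t + (4:ℝ) • (e * t) := by
    intro t
    rw [← mul_assoc, hRL]
    simp only [add_mul, smul_mul_assoc, one_mul, mul_assoc]
  have hER' : ∀ t : S, e * (r * t) = r * (e * t) + (2:ℝ) • (r * t) := by
    intro t
    rw [← mul_assoc, hER]
    simp only [add_mul, smul_mul_assoc, mul_assoc]
  simp only [sub_mul, mul_sub, add_mul, mul_add, smul_mul_assoc, mul_smul_comm, one_mul,
    mul_one, mul_assoc, smul_add, smul_sub, smul_smul, hRL', hER', hRL, hER]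
  match_scalars <;> ring

lemma superComm : lapLB m n * LinearMap.mulLeft ℝ (r2 m n)
    = LinearMap.mulLeft ℝ (r2 m n) * lapLB m n := by
  have hRL := superRL m n
  rw [show (2*(m:ℝ) - 4*(n:ℝ)) = 2*((sdim m n : ℝ)) from by push_cast [sdim]; ring] at hRL
  have hER := superER m n
  exact abstractComm (LinearMap.mulLeft ℝ (r2 m n)) (lap m n) (euler m n)
    ((sdim m n : ℝ)) hRL hER

end Lift

end LBAux

/-- Δ_LB commutes with multiplication by x², and for all k, j ≥ 0 and
H_k ∈ ℋ_k one has Δ_LB(x^{2j} H_k) = −k(M − 2 + k) x^{2j} H_k. -/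
theorem lapLB_comm_and_eigen (m n : ℕ) (hm : 1 ≤ m) (hn : 1 ≤ n) :
    lapLB m n ∘ₗ LinearMap.mulLeft ℝ (r2 m n) =
      LinearMap.mulLeft ℝ (r2 m n) ∘ₗ lapLB m n ∧
    ∀ (k j : ℕ) (Hk : SuperPoly m n), Hk ∈ HE m n k →
      lapLB m n ((r2 m n)^j * Hk) =
        (-(k:ℝ) * ((sdim m n : ℝ) - 2 + k)) • ((r2 m n)^j * Hk) := by
  have hcomm : lapLB m n ∘ₗ LinearMap.mulLeft ℝ (r2 m n) =
      LinearMap.mulLeft ℝ (r2 m n) ∘ₗ lapLB m n := LBAux.superComm m n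
  refine ⟨hcomm, ?_⟩
  intro k j Hk hHk
  rw [HE, Submodule.mem_inf] at hHk
  obtain ⟨h1, h2⟩ := hHk
  rw [PE, LinearMap.mem_ker, LinearMap.sub_apply, LinearMap.smul_apply, LinearMap.id_apply,
    sub_eq_zero] at h1
  rw [LinearMap.mem_ker] at h2
  have base : lapLB m n Hk = (-(k:ℝ) * ((sdim m n : ℝ) - 2 + k)) • Hk := by
    have hd : lapLB m n Hk =
        r2 m n * (lap m n Hk) -
          euler m n ((((sdim m n : ℝ) - 2)) • Hk + euler m n Hk) := rfl
    rw [hd, h2, h1, mul_zero, ← add_smul, map_smul, h1, smul_smul, zero_sub]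
    rw [show (-(k:ℝ) * ((sdim m n : ℝ) - 2 + k))
        = -((((sdim m n : ℝ) - 2 + (k:ℝ))) * k) from by ring]
    exact (neg_smul _ _).symm
  induction j with
  | zero => simpa using base
  | succ j ih =>
    have hstep : lapLB m n (r2 m n * ((r2 m n)^j * Hk))
        = r2 m n * lapLB m n ((r2 m n)^j * Hk) := by
      have h := congrArg
        (fun T : SuperPoly m n →ₗ[ℝ] SuperPoly m n => T ((r2 m n)^j * Hk)) hcomm
      simpa using h
    calc lapLB m n ((r2 m n)^(j+1) * Hk)
        = lapLB m n (r2 m n * ((r2 m n)^j * Hk)) := by rw [pow_succ', mul_assoc]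
    _ = r2 m n * lapLB m n ((r2 m n)^j * Hk) := hstep
    _ = r2 m n * ((-(k:ℝ) * ((sdim m n : ℝ) - 2 + k)) • ((r2 m n)^j * Hk)) := by rw [ih]
    _ = (-(k:ℝ) * ((sdim m n : ℝ) - 2 + k)) • ((r2 m n)^(j+1) * Hk) := by
        rw [mul_smul_comm, pow_succ', mul_assoc]

end
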